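/- Let R ∈ ℂ^{T×T} be Hermitian positive semidefinite and let h ∈ ℂ^T be such that the (real) number h^H R h is strictly positive. Define ŵ := (h^H R h)^{−1/2} · R h ∈ ℂ^T. Then (i) |h^H ŵ|² = h^H R h, and (ii) the matrix R − ŵ ŵ^H is positive semidefinite. -/

import Mathlib

open Matrix ComplexOrder

/-! For (ii), `xᴴ (R - ŵ ŵᴴ) x = xᴴ R x - |xᴴ R h|² / hᴴ R h`, which is nonnegative by the
Cauchy–Schwarz inequality for the semi-inner product `(x, y) ↦ xᴴ R y`. Part (i) is the case
`x = h` of the same computation of `|xᴴ ŵ|²`. -/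

namespace Matrix

variable {n 𝕜 : Type*} [Fintype n] [RCLike 𝕜]

open RCLike

lemma PosSemidef.norm_dotProduct_mulVec_sq_le {A : Matrix n n 𝕜} (hA : A.PosSemidef)
    (x y : n → 𝕜) :
    ‖star x ⬝ᵥ A *ᵥ y‖ ^ 2 ≤ re (star x ⬝ᵥ A *ᵥ x) * re (star y ⬝ᵥ A *ᵥ y) := by
  let := A.toSeminormedAddCommGroup hA
  let := A.toInnerProductSpace hA
  have inner_eq (u v : n → 𝕜) : inner 𝕜 u v = star u ⬝ᵥ A *ᵥ v := dotProduct_comm _ _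
  have cauchy_schwarz := inner_mul_inner_self_le (𝕜 := 𝕜) x y
  rwa [norm_inner_symm y x, ← sq, inner_eq, inner_eq, inner_eq] at cauchy_schwarz

lemma PosSemidef.ofReal_re_dotProduct_mulVec {A : Matrix n n 𝕜} (hA : A.PosSemidef)
    (x : n → 𝕜) : (re (star x ⬝ᵥ A *ᵥ x) : 𝕜) = star x ⬝ᵥ A *ᵥ x :=
  conj_eq_iff_re.mp <| conj_eq_iff_im.mpr (nonneg_iff.mp (hA.dotProduct_mulVec_nonneg x)).2

lemma star_dotProduct_vecMulVec_mulVec (w x : n → 𝕜) :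
    star x ⬝ᵥ vecMulVec w (star w) *ᵥ x = ((‖star x ⬝ᵥ w‖ ^ 2 : ℝ) : 𝕜) := by
  rw [vecMulVec_mulVec, op_smul_eq_smul, dotProduct_smul, smul_eq_mul, mul_comm,
    star_dotProduct w x, ofReal_pow, ← mul_conj]
  rfl

lemma PosSemidef.sub_vecMulVec {A : Matrix n n 𝕜} (hA : A.PosSemidef) {w : n → 𝕜}
    (hw : ∀ x, ‖star x ⬝ᵥ w‖ ^ 2 ≤ re (star x ⬝ᵥ A *ᵥ x)) :
    (A - vecMulVec w (star w)).PosSemidef := by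
  refine .of_dotProduct_mulVec_nonneg
    (hA.isHermitian.sub (posSemidef_vecMulVec_self_star w).isHermitian) fun x => ?_
  rw [sub_mulVec, dotProduct_sub, star_dotProduct_vecMulVec_mulVec, sub_nonneg,
    ← hA.ofReal_re_dotProduct_mulVec x, ofReal_le_ofReal]
  exact hw x

lemma norm_dotProduct_inv_sqrt_smul_sq (v x : n → 𝕜) {s : ℝ} (hs : 0 ≤ s) :
    ‖star x ⬝ᵥ ((√s)⁻¹ : 𝕜) • v‖ ^ 2 = ‖star x ⬝ᵥ v‖ ^ 2 / s := by
  rw [dotProduct_smul, smul_eq_mul, norm_mul, mul_pow, norm_inv, norm_ofReal,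
    abs_of_nonneg (Real.sqrt_nonneg s), inv_pow, Real.sq_sqrt hs, inv_mul_eq_div]

end Matrix

/-- for Hermitian PSD R and h with h^H R h > 0, the vector
ŵ := (h^H R h)^{−1/2} R h satisfies |h^H ŵ|² = h^H R h and R − ŵ ŵ^H ⪰ 0. -/
theorem sdr_rank_one_extraction (T : ℕ) (R : Matrix (Fin T) (Fin T) ℂ)
    (hR : R.PosSemidef) (h : Fin T → ℂ)
    (hpos : 0 < (star h ⬝ᵥ R.mulVec h).re)
    (what : Fin T → ℂ)
    (hwhat : what = fun i =>
      ((Real.sqrt ((star h ⬝ᵥ R.mulVec h).re))⁻¹ : ℂ) * R.mulVec h i) :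
    ((‖star h ⬝ᵥ what‖ ^ 2 : ℝ) : ℂ) = star h ⬝ᵥ R.mulVec h
      ∧ (R - vecMulVec what (star what)).PosSemidef := by
  set s := (star h ⬝ᵥ R *ᵥ h).re
  have hs : (s : ℂ) = star h ⬝ᵥ R *ᵥ h := hR.ofReal_re_dotProduct_mulVec h
  have hnorm (x : Fin T → ℂ) : ‖star x ⬝ᵥ what‖ ^ 2 = ‖star x ⬝ᵥ R *ᵥ h‖ ^ 2 / s :=
    hwhat ▸ norm_dotProduct_inv_sqrt_smul_sq _ x hpos.le
  refine ⟨?_, hR.sub_vecMulVec fun x => ?_⟩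
  · rw [hnorm, ← hs, Complex.norm_real, Real.norm_of_nonneg hpos.le, sq,
      mul_div_cancel_right₀ _ hpos.ne']
  · rw [hnorm]
    exact div_le_of_le_mul₀ hpos.le (hR.re_dotProduct_nonneg x)
      (hR.norm_dotProduct_mulVec_sq_le x h)
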